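/- Fix α ∈ (0,2), δ > 0, and 0 < γ < δ/2, and define ω₁(ξ) := δ(ξ − (1/4)ξ^{1+α/2}) for 0 < ξ ≤ 1 and ω₁(ξ) := (3/4)δ + γ log ξ for ξ > 1. Then for every bounded Lipschitz function f : ℝ → ℝ there exists a scaling factor λ > 0 such that f obeys the modulus of continuity ω(ξ) := ω₁(ξ/λ), i.e., |f(x)−f(y)| < ω₁(|x−y|/λ) for all x ≠ y. In particular, if f is not constant, any λ satisfying 0 < λ ≤ (2‖f‖_{L^∞}/‖f′‖_{L^∞}) e^{−2γ^{−1}‖f‖_{L^∞}} works. -/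

import Mathlib

open Real MeasureTheory Filter Set Topology

noncomputable section

/-- Principal-value Lévy operator: (𝓛 f)(x) = p.v. ∫ φ(x-y)(f(x)-f(y)) dy. -/
def levy (φ f : ℝ → ℝ) (x : ℝ) : ℝ :=
  limUnder (nhdsWithin (0:ℝ) (Set.Ioi 0))
    (fun ε => ∫ y in {y : ℝ | ε ≤ |x - y|}, φ (x - y) * (f x - f y))

/-- Principal-value alignment force. -/
def alignForce (φ ρ u : ℝ → ℝ) (x : ℝ) : ℝ :=
  limUnder (nhdsWithin (0:ℝ) (Set.Ioi 0))
    (fun ε => ∫ y in {y : ℝ | ε ≤ |x - y|}, φ (x - y) * (u y - u x) * ρ y)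

/-- Periodization -/
def phiS (φ : ℝ → ℝ) (x : ℝ) : ℝ := ∑' k : ℤ, φ (x + (k : ℝ))

def supNorm (f : ℝ → ℝ) : ℝ := ⨆ x : ℝ, |f x|

structure A12 (φ : ℝ → ℝ) (α a₀ c₁ c₂ : ℝ) : Prop where
  αpos : 0 < α
  αlt : α < 2
  a₀pos : 0 < a₀
  a₀le : a₀ ≤ 1/2
  c₁ge : 1 ≤ c₁
  c₂pos : 0 < c₂
  even : ∀ x : ℝ, φ (-x) = φ x
  smooth : ContDiffOn ℝ 4 φ {(0:ℝ)}ᶜ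
  lower : ∀ x : ℝ, x ≠ 0 → |x| ≤ a₀ → c₁⁻¹ * |x| ^ (-(1+α)) ≤ φ x
  upper : ∀ x : ℝ, x ≠ 0 → |x| ≤ a₀ → φ x ≤ c₁ * |x| ^ (-(1+α))
  derivBound : ∀ j : ℕ, 1 ≤ j → j ≤ 4 → ∀ x : ℝ, x ≠ 0 → |x| ≤ a₀ →
    |iteratedDeriv j φ x| ≤ c₁ * |x| ^ (-(1+(j:ℝ)+α))
  mono : ∀ r s : ℝ, 0 < r → r ≤ s → s ≤ a₀ → φ s ≤ φ r
  tailInt : ∀ j : ℕ, j ≤ 4 →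
    IntegrableOn (fun x : ℝ => |x| ^ (j:ℝ) * |iteratedDeriv j φ x|) {x : ℝ | a₀ ≤ |x|}
  tailBound : ∀ j : ℕ, j ≤ 4 →
    (∫ x in {x : ℝ | a₀ ≤ |x|}, |x| ^ (j:ℝ) * |iteratedDeriv j φ x|) ≤ c₂

structure EASol (φ : ℝ → ℝ) (T : ℝ) (ρ u : ℝ → ℝ → ℝ) : Prop where
  smooth_rho : ContDiffOn ℝ (⊤ : ℕ∞) (Function.uncurry ρ) (Set.univ ×ˢ Set.Icc 0 T)
  smooth_u : ContDiffOn ℝ (⊤ : ℕ∞) (Function.uncurry u) (Set.univ ×ˢ Set.Icc 0 T)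
  periodic_rho : ∀ x t, ρ (x + 1) t = ρ x t
  periodic_u : ∀ x t, u (x + 1) t = u x t
  mass : ∀ x : ℝ, ∀ t ∈ Set.Icc 0 T,
    derivWithin (fun s => ρ x s) (Set.Icc 0 T) t + deriv (fun y => ρ y t * u y t) x = 0
  mom : ∀ x : ℝ, ∀ t ∈ Set.Icc 0 T,
    derivWithin (fun s => u x s) (Set.Icc 0 T) t + u x t * deriv (fun y => u y t) x
      = alignForce φ (fun y => ρ y t) (fun y => u y t) x

/-- The basic modulus of continuity `ω₁`. -/
def omega1 (α δ γ : ℝ) (ξ : ℝ) : ℝ :=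
  if ξ ≤ 1 then δ * (ξ - ξ ^ (1 + α/2) / 4) else 3 * δ / 4 + γ * Real.log ξ

lemma key_ineq (a x : ℝ) (ha : 0 ≤ a) (hx0 : 0 ≤ x) (hxa : x ≤ a) :
    a * Real.exp (-x) ≤ a - x + 3/2 := by
  have hE : (1:ℝ) + x ≤ Real.exp x := by
    have := Real.add_one_le_exp x; linarith
  have hEpos : 0 < Real.exp x := Real.exp_pos x
  rw [Real.exp_neg, ← div_eq_mul_inv, div_le_iff₀ hEpos]
  nlinarith [mul_nonneg hx0 (sub_nonneg.2 hxa)]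

lemma core_ineq (α δ γ : ℝ) (hα : 0 < α) (hδ : 0 < δ)
    (hγ0 : 0 < γ) (hγ : γ < δ / 2) (f : ℝ → ℝ) (M K : ℝ) (hM : 0 < M) (hK : 0 < K)
    (hbM : ∀ x, |f x| ≤ M) (hbK : ∀ x y, |f x - f y| ≤ K * |x - y|)
    (lam : ℝ) (hlam : 0 < lam) (hle : lam ≤ 2 * M / K * Real.exp (-(2 * γ⁻¹ * M))) :
    ∀ x y : ℝ, x ≠ y → |f x - f y| < omega1 α δ γ (|x - y| / lam) := by
  intro x y hxy
  set a : ℝ := 2 * γ⁻¹ * M with ha_def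
  have ha : 0 < a := by positivity
  have hγa : γ * a = 2 * M := by
    rw [ha_def, show γ * (2 * γ⁻¹ * M) = 2 * M * (γ * γ⁻¹) by ring, mul_inv_cancel₀ hγ0.ne', mul_one]
  have hKlam : K * lam ≤ 2 * M * Real.exp (-a) := by
    calc K * lam ≤ K * (2 * M / K * Real.exp (-a)) := by
          exact mul_le_mul_of_nonneg_left hle hK.le
      _ = 2 * M * Real.exp (-a) := by field_simp
  have haea : a * Real.exp (-a) < 1 := by
    have h1 : a + 1 ≤ Real.exp a := Real.add_one_le_exp a
    have h2 : 0 < Real.exp a := Real.exp_pos a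
    rw [Real.exp_neg, ← div_eq_mul_inv, div_lt_one h2]
    linarith
  have hKγ : K * lam < γ := by
    have : 2 * M * Real.exp (-a) = γ * (a * Real.exp (-a)) := by
      rw [← hγa]; ring
    calc K * lam ≤ 2 * M * Real.exp (-a) := hKlam
      _ = γ * (a * Real.exp (-a)) := this
      _ < γ * 1 := by exact mul_lt_mul_of_pos_left haea hγ0
      _ = γ := mul_one γ
  set ξ : ℝ := |x - y| / lam with hξ_def
  have habs : 0 < |x - y| := abs_pos.2 (sub_ne_zero.2 hxy)
  have hξ0 : 0 < ξ := div_pos habs hlam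
  have hlamξ : |x - y| = lam * ξ := by rw [hξ_def, mul_div_assoc', mul_comm, mul_div_assoc, div_self hlam.ne', mul_one]
  have hlip : |f x - f y| ≤ K * lam * ξ := by
    calc |f x - f y| ≤ K * |x - y| := hbK x y
      _ = K * lam * ξ := by rw [hlamξ]; ring
  rcases le_or_gt ξ 1 with hξ1 | hξ1
  · -- small case
    rw [omega1, if_pos hξ1]
    have hpow : ξ ^ (1 + α/2) ≤ ξ := by
      calc ξ ^ (1 + α/2) ≤ ξ ^ (1:ℝ) :=
            Real.rpow_le_rpow_of_exponent_ge hξ0 hξ1 (by linarith)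
        _ = ξ := Real.rpow_one ξ
    have h1 : |f x - f y| < γ * ξ :=
      lt_of_le_of_lt hlip (by nlinarith)
    have h2 : γ * ξ < 3 * δ / 4 * ξ := by nlinarith
    nlinarith
  · rw [omega1, if_neg (not_le.2 hξ1)]
    rcases le_or_gt ξ (Real.exp a) with hξe | hξe
    · -- middle case
      set L : ℝ := Real.log ξ with hL_def
      have hL0 : 0 ≤ L := Real.log_nonneg hξ1.le
      have hLa : L ≤ a := (Real.log_le_iff_le_exp hξ0).2 hξe
      have hkey := key_ineq a (a - L) ha.le (by linarith) (by linarith)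
      have hexp : Real.exp (-(a - L)) = ξ * Real.exp (-a) := by
        rw [show -(a - L) = L + (-a) by ring, Real.exp_add, Real.exp_log hξ0]
      rw [hexp] at hkey
      -- hkey : a * (ξ * exp (-a)) ≤ L + 3/2
      have hchain : |f x - f y| ≤ γ * (L + 3/2) := by
        calc |f x - f y| ≤ K * lam * ξ := hlip
          _ ≤ 2 * M * Real.exp (-a) * ξ := by nlinarith
          _ = γ * (a * (ξ * Real.exp (-a))) := by rw [← hγa]; ring
          _ ≤ γ * (L + 3/2) := mul_le_mul_of_nonneg_left (by linarith) hγ0.le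
      have : γ * (L + 3/2) < 3 * δ / 4 + γ * L := by nlinarith
      linarith
    · -- tail case
      have hlog : a < Real.log ξ := (Real.lt_log_iff_exp_lt hξ0).2 hξe
      have h2M : |f x - f y| ≤ 2 * M := by
        calc |f x - f y| ≤ |f x| + |f y| := abs_sub _ _
          _ ≤ M + M := add_le_add (hbM x) (hbM y)
          _ = 2 * M := by ring
      calc |f x - f y| ≤ 2 * M := h2M
        _ = γ * a := hγa.symm
        _ < γ * Real.log ξ := mul_lt_mul_of_pos_left hlog hγ0
        _ < 3 * δ / 4 + γ * Real.log ξ := by linarith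

/-- Every bounded Lipschitz function obeys the rescaled modulus of
continuity `ω(ξ) = ω₁(ξ/λ)` for some small scaling factor `λ > 0`; moreover, for a
non-constant `f` with bound `M ≥ |f|` and Lipschitz bound `K ≥ ‖f′‖_∞`, any
`0 < λ ≤ (2M/K) e^{-2γ⁻¹M}` works. -/
theorem stmt12 (α δ γ : ℝ) (hα : 0 < α) (hα2 : α < 2) (hδ : 0 < δ)
    (hγ0 : 0 < γ) (hγ : γ < δ / 2) (f : ℝ → ℝ) :
    ((∃ M : ℝ, ∀ x, |f x| ≤ M) → (∃ K : ℝ, ∀ x y, |f x - f y| ≤ K * |x - y|) →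
      ∃ lam > (0:ℝ), ∀ x y : ℝ, x ≠ y → |f x - f y| < omega1 α δ γ (|x - y| / lam)) ∧
    (∀ M K : ℝ, 0 < M → 0 < K →
      (∀ x, |f x| ≤ M) → (∀ x y, |f x - f y| ≤ K * |x - y|) →
      (∃ x y, f x ≠ f y) →
      ∀ lam : ℝ, 0 < lam → lam ≤ 2 * M / K * Real.exp (-(2 * γ⁻¹ * M)) →
        ∀ x y : ℝ, x ≠ y → |f x - f y| < omega1 α δ γ (|x - y| / lam)) := by
  constructor
  · rintro ⟨M, hM⟩ ⟨K, hK⟩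
    set M' : ℝ := max M 1 with hM'_def
    set K' : ℝ := max K 1 with hK'_def
    have hM'pos : (0:ℝ) < M' := lt_of_lt_of_le one_pos (le_max_right _ _)
    have hK'pos : (0:ℝ) < K' := lt_of_lt_of_le one_pos (le_max_right _ _)
    have hbM : ∀ x, |f x| ≤ M' := fun x => (hM x).trans (le_max_left _ _)
    have hbK : ∀ x y, |f x - f y| ≤ K' * |x - y| := fun x y =>
      (hK x y).trans (mul_le_mul_of_nonneg_right (le_max_left _ _) (abs_nonneg _))
    refine ⟨2 * M' / K' * Real.exp (-(2 * γ⁻¹ * M')), by positivity, ?_⟩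
    exact core_ineq α δ γ hα hδ hγ0 hγ f M' K' hM'pos hK'pos hbM hbK _ (by positivity) le_rfl
  · intro M K hM hK hbM hbK _ lam hlam hle
    exact core_ineq α δ γ hα hδ hγ0 hγ f M K hM hK hbM hbK lam hlam hle
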